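/- Let q, p : ℝ → ℝ³ be smooth curves with p(t) · q(t) = 1 and p'(t) = q(t) × q'(t) for all t, and set I(t) := det(q, q', q'')(t) and Ī(t) := det(p, p', p'')(t). Then: (1) p'·q = p·q' = p'·q' = p·q'' = p''·q = 0 identically; (2) if I is nowhere zero then I(t) p(t) = q'(t) × q''(t) for all t; (3) if Ī is nowhere zero then Ī(t) q(t) = p'(t) × p''(t) and q'(t) = −p(t) × p'(t) for all t. -/

import Mathlib

/-!
The orthogonality relations come from `p' = q × q'` being orthogonal to `q` and `q'`, together
with the derivatives of the constant products `p·q = 1`, `p·q' = 0` and `p'·q = 0`.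
The remaining identities follow from writing a vector in the basis dual to `a, b, c`:
`det(a, b, c) v = (v·a) b × c + (v·b) c × a + (v·c) a × b`, applied with `v = p` to `q, q', q''`
and with `v = q` to `p, p', p''`, and from `p × (q × q') = (p·q') q - (p·q) q'`.
-/

open Matrix

/-- Scalar triple product on ℝ³. -/
def det3 (u v w : Fin 3 → ℝ) : ℝ := u ⬝ᵥ (v ⨯₃ w)

section Calculus

variable {𝕜 ι : Type*} [NontriviallyNormedField 𝕜] [Fintype ι]

theorem HasDerivAt.dotProduct {f g : 𝕜 → ι → 𝕜} {f' g' : ι → 𝕜} {t : 𝕜}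
    (hf : HasDerivAt f f' t) (hg : HasDerivAt g g' t) :
    HasDerivAt (fun t => f t ⬝ᵥ g t) (f' ⬝ᵥ g t + f t ⬝ᵥ g') t := by
  have h := HasDerivAt.fun_sum (u := Finset.univ) fun i _ =>
    (hasDerivAt_pi.mp hf i).fun_mul (hasDerivAt_pi.mp hg i)
  unfold _root_.dotProduct
  rwa [← Finset.sum_add_distrib]

theorem deriv_dotProduct_add_dotProduct_deriv_eq_zero {f g : 𝕜 → ι → 𝕜} {c : 𝕜} {t : 𝕜}
    (hf : DifferentiableAt 𝕜 f t) (hg : DifferentiableAt 𝕜 g t)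
    (hfg : ∀ s, f s ⬝ᵥ g s = c) :
    deriv f t ⬝ᵥ g t + f t ⬝ᵥ deriv g t = 0 := by
  have h := hf.hasDerivAt.dotProduct hg.hasDerivAt
  simp only [hfg] at h
  exact h.unique (hasDerivAt_const t c)

end Calculus

section TripleProduct

variable {R : Type*} [CommRing R]

theorem dotProduct_cross_smul (a b c v : Fin 3 → R) :
    (a ⬝ᵥ b ⨯₃ c) • v = (v ⬝ᵥ a) • (b ⨯₃ c) + (v ⬝ᵥ b) • (c ⨯₃ a) + (v ⬝ᵥ c) • (a ⨯₃ b) := by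
  ext i
  fin_cases i <;>
  · simp only [cross_apply, vec3_dotProduct, Pi.add_apply, Pi.smul_apply, smul_eq_mul,
      Fin.isValue, Fin.zero_eta, Fin.mk_one, Fin.reduceFinMk, cons_val]
    ring

theorem dotProduct_cross_smul_eq_cross {a b c v : Fin 3 → R}
    (ha : v ⬝ᵥ a = 1) (hb : v ⬝ᵥ b = 0) (hc : v ⬝ᵥ c = 0) :
    (a ⬝ᵥ b ⨯₃ c) • v = b ⨯₃ c := by
  simp [dotProduct_cross_smul, ha, hb, hc]

end TripleProduct

namespace CartanEngel

variable {q p : ℝ → Fin 3 → ℝ} (hode : ∀ t, deriv p t = q t ⨯₃ deriv q t)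
include hode

theorem deriv_dotProduct_eq_zero (t : ℝ) : deriv p t ⬝ᵥ q t = 0 := by
  rw [hode, dotProduct_comm, dot_self_cross]

theorem deriv_dotProduct_deriv_eq_zero (t : ℝ) : deriv p t ⬝ᵥ deriv q t = 0 := by
  rw [hode, dotProduct_comm, dot_cross_self]

theorem dotProduct_deriv_eq_zero (hp : Differentiable ℝ p) (hq : Differentiable ℝ q)
    (hpq : ∀ t, p t ⬝ᵥ q t = 1) (t : ℝ) : p t ⬝ᵥ deriv q t = 0 := by
  have h := deriv_dotProduct_add_dotProduct_deriv_eq_zero (hp t) (hq t) hpq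
  rwa [deriv_dotProduct_eq_zero hode, zero_add] at h

theorem dotProduct_deriv_deriv_eq_zero (hp : Differentiable ℝ p) (hq : Differentiable ℝ q)
    (hq' : Differentiable ℝ (deriv q)) (hpq : ∀ t, p t ⬝ᵥ q t = 1) (t : ℝ) :
    p t ⬝ᵥ deriv (deriv q) t = 0 := by
  have h := deriv_dotProduct_add_dotProduct_deriv_eq_zero (hp t) (hq' t)
    (dotProduct_deriv_eq_zero hode hp hq hpq)
  rwa [deriv_dotProduct_deriv_eq_zero hode, zero_add] at h

theorem deriv_deriv_dotProduct_eq_zero (hp' : Differentiable ℝ (deriv p))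
    (hq : Differentiable ℝ q) (t : ℝ) :
    deriv (deriv p) t ⬝ᵥ q t = 0 := by
  have h := deriv_dotProduct_add_dotProduct_deriv_eq_zero (hp' t) (hq t)
    (deriv_dotProduct_eq_zero hode)
  rwa [deriv_dotProduct_deriv_eq_zero hode, add_zero] at h

theorem deriv_eq_neg_cross_deriv (hp : Differentiable ℝ p) (hq : Differentiable ℝ q)
    (hpq : ∀ t, p t ⬝ᵥ q t = 1) (t : ℝ) : deriv q t = -(p t ⨯₃ deriv p t) := by
  rw [hode, cross_cross_eq_smul_sub_smul', dotProduct_deriv_eq_zero hode hp hq hpq,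
    dotProduct_comm, hpq]
  simp

end CartanEngel

/-- Basic identities along integral curves of the Cartan–Engel system
`p ⬝ᵥ q = 1`, `p' = q × q'`. -/
theorem integral_curve_identities (q p : ℝ → Fin 3 → ℝ)
    (hq : ContDiff ℝ (⊤ : ℕ∞) q) (hp : ContDiff ℝ (⊤ : ℕ∞) p)
    (hpq : ∀ t, p t ⬝ᵥ q t = 1)
    (hode : ∀ t, deriv p t = q t ⨯₃ deriv q t) :
    (∀ t, deriv p t ⬝ᵥ q t = 0 ∧ p t ⬝ᵥ deriv q t = 0 ∧
      deriv p t ⬝ᵥ deriv q t = 0 ∧ p t ⬝ᵥ deriv (deriv q) t = 0 ∧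
      deriv (deriv p) t ⬝ᵥ q t = 0) ∧
    ((∀ t, det3 (q t) (deriv q t) (deriv (deriv q) t) ≠ 0) →
      ∀ t, det3 (q t) (deriv q t) (deriv (deriv q) t) • p t
        = deriv q t ⨯₃ deriv (deriv q) t) ∧
    ((∀ t, det3 (p t) (deriv p t) (deriv (deriv p) t) ≠ 0) →
      ∀ t, det3 (p t) (deriv p t) (deriv (deriv p) t) • q t
          = deriv p t ⨯₃ deriv (deriv p) t ∧
        deriv q t = -(p t ⨯₃ deriv p t)) := by
  have hq2 : ContDiff ℝ 2 q := hq.of_le (by norm_cast)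
  have hp2 : ContDiff ℝ 2 p := hp.of_le (by norm_cast)
  have hqd := hq2.differentiable two_ne_zero
  have hpd := hp2.differentiable two_ne_zero
  have hA := CartanEngel.deriv_dotProduct_eq_zero hode
  have hB := CartanEngel.dotProduct_deriv_eq_zero hode hpd hqd hpq
  have hC := CartanEngel.deriv_dotProduct_deriv_eq_zero hode
  have hD := CartanEngel.dotProduct_deriv_deriv_eq_zero hode hpd hqd
    hq2.differentiable_deriv_two hpq
  have hE := CartanEngel.deriv_deriv_dotProduct_eq_zero hode hp2.differentiable_deriv_two hqd
  refine ⟨fun t => ⟨hA t, hB t, hC t, hD t, hE t⟩,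
    fun _ t => dotProduct_cross_smul_eq_cross (hpq t) (hB t) (hD t),
    fun _ t => ⟨?_, CartanEngel.deriv_eq_neg_cross_deriv hode hpd hqd hpq t⟩⟩
  exact dotProduct_cross_smul_eq_cross (by rw [dotProduct_comm, hpq])
    (by rw [dotProduct_comm, hA]) (by rw [dotProduct_comm, hE])
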